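/- arXiv:2002.06631 — 3 statements merged into one kernel-verified Lean document; each statement's English description precedes it below -/
import Mathlib

section
/- A dual number [d₁, d₂] = d₁ + d₂ε is a distance between some pair of points in D², i.e., lies in the image of ρ, if and only if d₁ > 0, or d₁ = 0 and d₂ = 0. -/
noncomputable section

/-- A dual number `x + y·ε` is represented as the pair `(x, y)`. -/
abbrev DualNum := ℝ × ℝ

/-- Multiplication in the dual numbers ℝ[ε]/(ε²). -/
def dmul (a b : DualNum) : DualNum := (a.1 * b.1, a.1 * b.2 + a.2 * b.1)

/-- A point of the dual plane D². -/
abbrev DualPt := DualNum × DualNum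

/-- `[x, y, z, w]` denotes the point `(x + yε, z + wε) ∈ D²`. -/
def dpt (x y z w : ℝ) : DualPt := ((x, y), (z, w))

/-- The Euclidean-style distance `ρ(p,q) = (p₁-q₁)² + (p₂-q₂)²` computed in D. -/
def rhoD (p q : DualPt) : DualNum :=
  dmul (p.1 - q.1) (p.1 - q.1) + dmul (p.2 - q.2) (p.2 - q.2)

theorem stmt2 (d₁ d₂ : ℝ) :
    (∃ p q : DualPt, rhoD p q = (d₁, d₂)) ↔ d₁ > 0 ∨ (d₁ = 0 ∧ d₂ = 0) := by
  constructor
  · rintro ⟨p, q, h⟩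
    simp only [rhoD, dmul, Prod.ext_iff, Prod.fst_add, Prod.snd_add, Prod.fst_sub,
      Prod.snd_sub] at h
    obtain ⟨h1, h2⟩ := h
    set a := p.1.1 - q.1.1
    set c := p.2.1 - q.2.1
    rcases lt_or_eq_of_le (add_nonneg (mul_self_nonneg a) (mul_self_nonneg c)) with hlt | heq
    · left; rw [← h1]; exact hlt
    · right
      have ha : a = 0 := by nlinarith
      have hc : c = 0 := by nlinarith
      constructor
      · rw [← h1, ha, hc]; ring
      · rw [← h2, ha, hc]; ring
  · rintro (h | ⟨h1, h2⟩)
    · refine ⟨dpt (Real.sqrt d₁) (d₂ / (2 * Real.sqrt d₁)) 0 0, dpt 0 0 0 0, ?_⟩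
      have hs : Real.sqrt d₁ ≠ 0 := by positivity
      simp only [rhoD, dpt, dmul, Prod.ext_iff, Prod.fst_add, Prod.snd_add, Prod.fst_sub,
        Prod.snd_sub]
      constructor
      · simp [Real.mul_self_sqrt h.le]
      · field_simp; ring
    · exact ⟨dpt 0 0 0 0, dpt 0 0 0 0, by simp [rhoD, dpt, dmul, h1, h2, Prod.ext_iff]⟩
end
end

section
/- Let m, k ≥ 1 and let P = {[a, 0, 0, b] ∈ D² : a ∈ {1,…,m}, b ∈ {1,…,k}}. Then the set of distances spanned by pairs of points of P is exactly {[c², 0] : c ∈ {0, 1, …, m-1}}; in particular, P spans exactly m distinct distances. -/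
noncomputable section

theorem stmt8 (m k : ℕ) (hm : 1 ≤ m) (hk : 1 ≤ k)
    (P : Set DualPt)
    (hP : P = {p | ∃ a ∈ Finset.Icc 1 m, ∃ b ∈ Finset.Icc 1 k,
        p = dpt (a : ℝ) 0 0 (b : ℝ)}) :
    {d : DualNum | ∃ p ∈ P, ∃ q ∈ P, rhoD p q = d} =
      {d : DualNum | ∃ c : ℕ, c < m ∧ d = (((c : ℝ)) ^ 2, 0)} ∧
    {d : DualNum | ∃ p ∈ P, ∃ q ∈ P, rhoD p q = d}.ncard = m := by
  have key : {d : DualNum | ∃ p ∈ P, ∃ q ∈ P, rhoD p q = d} =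
      {d : DualNum | ∃ c : ℕ, c < m ∧ d = (((c : ℝ)) ^ 2, 0)} := by
    subst hP
    ext d
    simp only [Set.mem_setOf_eq, Finset.mem_Icc]
    constructor
    · rintro ⟨p, ⟨a, ⟨ha1, ha2⟩, b, ⟨hb1, hb2⟩, rfl⟩,
        q, ⟨a', ⟨ha1', ha2'⟩, b', ⟨hb1', hb2'⟩, rfl⟩, rfl⟩
      rcases le_total a' a with h | h
      · refine ⟨a - a', by omega, ?_⟩
        simp [rhoD, dmul, dpt, Prod.ext_iff]
        have : ((a - a' : ℕ) : ℝ) = (a : ℝ) - a' := by push_cast [h]; ring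
        rw [this]; ring
      · refine ⟨a' - a, by omega, ?_⟩
        simp [rhoD, dmul, dpt, Prod.ext_iff]
        have : ((a' - a : ℕ) : ℝ) = (a' : ℝ) - a := by push_cast [h]; ring
        rw [this]; ring
    · rintro ⟨c, hc, rfl⟩
      refine ⟨dpt (c + 1 : ℕ) 0 0 1, ⟨c + 1, ⟨by omega, by omega⟩, 1, ⟨le_refl 1, hk⟩,
        by push_cast; rfl⟩, dpt 1 0 0 1, ⟨1, ⟨le_refl 1, hm⟩, 1, ⟨le_refl 1, hk⟩,
        by push_cast; rfl⟩, ?_⟩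
      simp [rhoD, dmul, dpt, Prod.ext_iff]
      push_cast; ring
  refine ⟨key, ?_⟩
  rw [key]
  have : {d : DualNum | ∃ c : ℕ, c < m ∧ d = (((c : ℝ)) ^ 2, 0)} =
      ↑((Finset.range m).image fun c : ℕ => (((c : ℝ)) ^ 2, (0 : ℝ))) := by
    ext d; simp [eq_comm]
  rw [this, Set.ncard_coe_finset, Finset.card_image_of_injOn, Finset.card_range]
  intro x _ y _ hxy
  have : (x : ℝ) ^ 2 = (y : ℝ) ^ 2 := by simpa [Prod.ext_iff] using hxy
  have h2 : x ^ 2 = y ^ 2 := by exact_mod_cast this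
  exact Nat.pow_left_injective (by norm_num) h2
end
end

section
/- Let C ⊂ ℝ² be the unit circle centered at the origin. For any (x,z) ∈ C and (y,w) ∈ C, the points ⟨x, 0, z, 0⟩ and ⟨0, y, 0, w⟩ in W² span the distance ⟨1,1⟩. Consequently, if P₁ is a set of n points of the form ⟨x,0,z,0⟩ with (x,z) ∈ C and P₂ is a set of n points of the form ⟨0,y,0,w⟩ with (y,w) ∈ C, then P₁ ∪ P₂ has at most 2n points and spans the distance ⟨1,1⟩ at least n² times. -/
noncomputable section

/-- A double number `X + Y·j` is represented as the pair `(X, Y)`. -/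
abbrev DblNum := ℝ × ℝ

/-- Multiplication in the double numbers ℝ[j]/(j² - 1). -/
def wmul (a b : DblNum) : DblNum := (a.1 * b.1 + a.2 * b.2, a.1 * b.2 + a.2 * b.1)

/-- A point of the double plane W². -/
abbrev DblPt := DblNum × DblNum

/-- The coordinates `⟨x, y⟩ = (x+y)/2 + ((x-y)/2)·j`. -/
def ang (x y : ℝ) : DblNum := ((x + y) / 2, (x - y) / 2)

/-- `⟨x, y, z, w⟩` denotes the point `(⟨x,y⟩, ⟨z,w⟩) ∈ W²`. -/
def apt (x y z w : ℝ) : DblPt := (ang x y, ang z w)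

/-- The Euclidean-style distance `ρ(p,q) = (p₁-q₁)² + (p₂-q₂)²` computed in W. -/
def rhoW (p q : DblPt) : DblNum :=
  wmul (p.1 - q.1) (p.1 - q.1) + wmul (p.2 - q.2) (p.2 - q.2)

open scoped Classical in
theorem stmt15 :
    (∀ x z y w : ℝ, x ^ 2 + z ^ 2 = 1 → y ^ 2 + w ^ 2 = 1 →
        rhoW (apt x 0 z 0) (apt 0 y 0 w) = ang 1 1) ∧
    ∀ (n : ℕ) (P₁ P₂ : Finset DblPt),
      P₁.card = n → P₂.card = n →
      (∀ p ∈ P₁, ∃ x z : ℝ, x ^ 2 + z ^ 2 = 1 ∧ p = apt x 0 z 0) →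
      (∀ p ∈ P₂, ∃ y w : ℝ, y ^ 2 + w ^ 2 = 1 ∧ p = apt 0 y 0 w) →
      (P₁ ∪ P₂).card ≤ 2 * n ∧
        n ^ 2 ≤ (((P₁ ∪ P₂) ×ˢ (P₁ ∪ P₂)).filter
          (fun pq => rhoW pq.1 pq.2 = ang 1 1)).card := by
  have key : ∀ x z y w : ℝ, x ^ 2 + z ^ 2 = 1 → y ^ 2 + w ^ 2 = 1 →
      rhoW (apt x 0 z 0) (apt 0 y 0 w) = ang 1 1 := by
    intro x z y w hx hy
    simp only [rhoW, wmul, apt, ang, Prod.mk_sub_mk, Prod.mk_add_mk, Prod.fst, Prod.snd,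
      Prod.ext_iff]
    constructor <;> nlinarith [hx, hy]
  refine ⟨key, ?_⟩
  intro n P₁ P₂ h1 h2 hP1 hP2
  constructor
  · calc (P₁ ∪ P₂).card ≤ P₁.card + P₂.card := Finset.card_union_le _ _
      _ = 2 * n := by omega
  · have hsub : P₁ ×ˢ P₂ ⊆ ((P₁ ∪ P₂) ×ˢ (P₁ ∪ P₂)).filter
        (fun pq => rhoW pq.1 pq.2 = ang 1 1) := by
      intro pq hpq
      rw [Finset.mem_product] at hpq
      rw [Finset.mem_filter, Finset.mem_product]
      obtain ⟨x, z, hxz, he1⟩ := hP1 pq.1 hpq.1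
      obtain ⟨y, w, hyw, he2⟩ := hP2 pq.2 hpq.2
      refine ⟨⟨Finset.mem_union_left _ hpq.1, Finset.mem_union_right _ hpq.2⟩, ?_⟩
      rw [he1, he2]; exact key x z y w hxz hyw
    calc n ^ 2 = (P₁ ×ˢ P₂).card := by rw [Finset.card_product, h1, h2, sq]
      _ ≤ _ := Finset.card_le_card hsub
end
end
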